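/- Let 1 < p < ∞, let v = (v_n)_{n≥0} be a positive sequence (a weight), and let r, s be nonzero real numbers. The operator B(r,s), defined by (B(r,s)x)_n = s x_{n-1} + r x_n (with x_{-1} := 0), maps l_p(v) boundedly into itself if and only if the sequence (v_{n+1}/v_n)_{n≥0} is bounded. -/

import Mathlib

/-!
If `v (n+1) ≤ M v n`, then `‖(B x)_n‖ v_n ≤ |s| M (‖x_{n-1}‖ v_{n-1}) + |r| (‖x_n‖ v_n)`, so
Minkowski's inequality bounds `B(r,s)` on `l_p(v)` by `|s| M + |r|`. Conversely, `B(r,s)` sends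
the `n`-th unit vector, of norm `v n`, to a sequence whose `(n+1)`-st entry is `s`, so a bound `C`
forces `|s| v (n+1) ≤ C v n`.
-/

/-- The generalized difference operator `B(r,s)` on sequences:
`(B(r,s)x)_n = s x_{n-1} + r x_n` with `x_{-1} := 0`. -/
def Bop (r s : ℝ) (x : ℕ → ℂ) : ℕ → ℂ
  | 0 => (r : ℂ) * x 0
  | (n + 1) => (s : ℂ) * x n + (r : ℂ) * x (n + 1)

open Real

section WeightedSum

variable {ι : Type*} {p : ℝ} {f g : ι → ℝ}

lemma le_tsum_rpow_one_div (hp : 0 < p) (hf : ∀ i, 0 ≤ f i) (hsum : Summable fun i => f i ^ p)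
    (i : ι) : f i ≤ (∑' j, f j ^ p) ^ (1 / p) := by
  have h : f i ^ p ≤ ∑' j, f j ^ p :=
    hsum.le_tsum i fun j _ => rpow_nonneg (hf j) p
  calc f i = (f i ^ p) ^ (1 / p) := by rw [one_div, rpow_rpow_inv (hf i) hp.ne']
    _ ≤ (∑' j, f j ^ p) ^ (1 / p) :=
      rpow_le_rpow (rpow_nonneg (hf i) p) h (one_div_nonneg.2 hp.le)

lemma summable_and_tsum_rpow_one_div_le_of_le (hp : 0 ≤ p) (hf : ∀ i, 0 ≤ f i)
    (hfg : ∀ i, f i ≤ g i) (hg : Summable fun i => g i ^ p) :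
    (Summable fun i => f i ^ p) ∧ (∑' i, f i ^ p) ^ (1 / p) ≤ (∑' i, g i ^ p) ^ (1 / p) := by
  have hle : ∀ i, f i ^ p ≤ g i ^ p := fun i => rpow_le_rpow (hf i) (hfg i) hp
  have hf' : Summable fun i => f i ^ p := hg.of_nonneg_of_le (fun i => rpow_nonneg (hf i) p) hle
  exact ⟨hf', rpow_le_rpow (tsum_nonneg fun i => rpow_nonneg (hf i) p)
    (hf'.tsum_le_tsum hle hg) (one_div_nonneg.2 hp)⟩

lemma summable_mul_rpow {c : ℝ} (hc : 0 ≤ c) (hf : ∀ i, 0 ≤ f i)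
    (hsum : Summable fun i => f i ^ p) : Summable fun i => (c * f i) ^ p := by
  simpa only [mul_rpow hc (hf _)] using hsum.mul_left (c ^ p)

lemma tsum_mul_rpow_one_div (hp : 0 < p) {c : ℝ} (hc : 0 ≤ c) (hf : ∀ i, 0 ≤ f i) :
    (∑' i, (c * f i) ^ p) ^ (1 / p) = c * (∑' i, f i ^ p) ^ (1 / p) := by
  simp only [mul_rpow hc (hf _), tsum_mul_left]
  rw [mul_rpow (rpow_nonneg hc p) (tsum_nonneg fun i => rpow_nonneg (hf i) p), one_div,
    rpow_rpow_inv hc hp.ne']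

end WeightedSum

def shiftRight {α : Type*} [Zero α] (a : ℕ → α) : ℕ → α
  | 0 => 0
  | n + 1 => a n

lemma shiftRight_rpow {p : ℝ} (hp : p ≠ 0) (a : ℕ → ℝ) (n : ℕ) :
    shiftRight a n ^ p = shiftRight (fun k => a k ^ p) n := by
  cases n with
  | zero => exact zero_rpow hp
  | succ n => rfl

lemma hasSum_shiftRight {α : Type*} [AddCommGroup α] [TopologicalSpace α]
    [IsTopologicalAddGroup α] {a : ℕ → α} {S : α} (h : HasSum a S) : HasSum (shiftRight a) S := by
  have h' : HasSum (fun n => shiftRight a (n + 1)) (S - ∑ i ∈ Finset.range 1, shiftRight a i) := by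
    simpa [shiftRight] using h
  exact (hasSum_nat_add_iff' 1).1 h'

lemma norm_Bop_mul_le {r s M : ℝ} {v : ℕ → ℝ} (hv : ∀ n, 0 ≤ v n)
    (hM : ∀ n, v (n + 1) ≤ M * v n) (x : ℕ → ℂ) (n : ℕ) :
    ‖Bop r s x n‖ * v n ≤
      |s| * M * shiftRight (fun k => ‖x k‖ * v k) n + |r| * (‖x n‖ * v n) := by
  cases n with
  | zero => simp [Bop, shiftRight, mul_assoc]
  | succ k =>
    have hB : ‖Bop r s x (k + 1)‖ ≤ |s| * ‖x k‖ + |r| * ‖x (k + 1)‖ := by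
      simpa [Bop] using norm_add_le ((s : ℂ) * x k) ((r : ℂ) * x (k + 1))
    calc ‖Bop r s x (k + 1)‖ * v (k + 1)
        ≤ (|s| * ‖x k‖ + |r| * ‖x (k + 1)‖) * v (k + 1) :=
          mul_le_mul_of_nonneg_right hB (hv _)
      _ = |s| * ‖x k‖ * v (k + 1) + |r| * (‖x (k + 1)‖ * v (k + 1)) := by ring
      _ ≤ |s| * ‖x k‖ * (M * v k) + |r| * (‖x (k + 1)‖ * v (k + 1)) := by
          gcongr
          exact hM k
      _ = |s| * M * shiftRight (fun k => ‖x k‖ * v k) (k + 1)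
            + |r| * (‖x (k + 1)‖ * v (k + 1)) := by
          simp only [shiftRight]; ring

lemma summable_and_tsum_Bop_le {p : ℝ} (hp : 1 ≤ p) {v : ℕ → ℝ} (hv : ∀ n, 0 ≤ v n) {M : ℝ}
    (hM0 : 0 ≤ M) (hM : ∀ n, v (n + 1) ≤ M * v n) (r s : ℝ) (x : ℕ → ℂ)
    (hx : Summable fun n => (‖x n‖ * v n) ^ p) :
    Summable (fun n => (‖Bop r s x n‖ * v n) ^ p) ∧
      (∑' n, (‖Bop r s x n‖ * v n) ^ p) ^ (1 / p)
        ≤ (|s| * M + |r|) * (∑' n, (‖x n‖ * v n) ^ p) ^ (1 / p) := by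
  have hp0 : 0 < p := zero_lt_one.trans_le hp
  set a : ℕ → ℝ := fun n => ‖x n‖ * v n
  have ha : ∀ n, 0 ≤ a n := fun n => mul_nonneg (norm_nonneg _) (hv n)
  have hsa : ∀ n, 0 ≤ shiftRight a n := by
    rintro (_ | n)
    exacts [le_rfl, ha n]
  have hshift : HasSum (fun n => shiftRight a n ^ p) (∑' n, a n ^ p) := by
    simpa only [shiftRight_rpow hp0.ne'] using hasSum_shiftRight hx.hasSum
  have hc : 0 ≤ |s| * M := by positivity
  obtain ⟨hsum, hmink⟩ := Real.Lp_add_le_tsum_of_nonneg hp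
    (fun n => mul_nonneg hc (hsa n)) (fun n => mul_nonneg (abs_nonneg r) (ha n))
    (summable_mul_rpow hc hsa hshift.summable) (summable_mul_rpow (abs_nonneg r) ha hx)
  obtain ⟨hB, hle⟩ := summable_and_tsum_rpow_one_div_le_of_le hp0.le
    (fun n => mul_nonneg (norm_nonneg _) (hv n)) (norm_Bop_mul_le hv hM x) hsum
  refine ⟨hB, hle.trans (hmink.trans_eq ?_)⟩
  rw [tsum_mul_rpow_one_div hp0 hc hsa, tsum_mul_rpow_one_div hp0 (abs_nonneg r) ha,
    hshift.tsum_eq]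
  ring

lemma abs_mul_succ_le_of_Bop_bounded {p : ℝ} (hp : 0 < p) {v : ℕ → ℝ} (hv : ∀ n, 0 ≤ v n)
    {r s C : ℝ} (hC : ∀ x : ℕ → ℂ, Summable (fun n => (‖x n‖ * v n) ^ p) →
        Summable (fun n => (‖Bop r s x n‖ * v n) ^ p) ∧
        (∑' n, (‖Bop r s x n‖ * v n) ^ p) ^ (1 / p)
          ≤ C * (∑' n, (‖x n‖ * v n) ^ p) ^ (1 / p)) (n : ℕ) :
    |s| * v (n + 1) ≤ C * v n := by
  have hunit : (fun k => (‖(Pi.single n 1 : ℕ → ℂ) k‖ * v k) ^ p) = Pi.single n (v n ^ p) := by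
    ext k
    rcases eq_or_ne k n with rfl | hk
    · simp
    · simp [hk, zero_rpow hp.ne']
  obtain ⟨hB, hle⟩ := hC (Pi.single n 1) (by rw [hunit]; exact (hasSum_pi_single n _).summable)
  calc |s| * v (n + 1) = ‖Bop r s (Pi.single n 1) (n + 1)‖ * v (n + 1) := by simp [Bop]
    _ ≤ (∑' k, (‖Bop r s (Pi.single n 1) k‖ * v k) ^ p) ^ (1 / p) :=
      le_tsum_rpow_one_div hp (fun k => mul_nonneg (norm_nonneg _) (hv k)) hB (n + 1)
    _ ≤ C * (∑' k, (‖(Pi.single n 1 : ℕ → ℂ) k‖ * v k) ^ p) ^ (1 / p) := hle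
    _ = C * v n := by
      rw [hunit, (hasSum_pi_single n _).tsum_eq, one_div, rpow_rpow_inv (hv n) hp.ne']

theorem stmt2 (p : ℝ) (hp : 1 < p) (v : ℕ → ℝ) (hv : ∀ n, 0 < v n)
    (r s : ℝ) (hs : s ≠ 0) :
    (∃ C > 0, ∀ x : ℕ → ℂ, Summable (fun n => (‖x n‖ * v n) ^ p) →
        Summable (fun n => (‖Bop r s x n‖ * v n) ^ p) ∧
        (∑' n, (‖Bop r s x n‖ * v n) ^ p) ^ (1 / p)
          ≤ C * (∑' n, (‖x n‖ * v n) ^ p) ^ (1 / p)) ↔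
      ∃ M : ℝ, ∀ n, v (n + 1) / v n ≤ M := by
  have hv0 : ∀ n, 0 ≤ v n := fun n => (hv n).le
  constructor
  · rintro ⟨C, -, hC⟩
    refine ⟨C / |s|, fun n => ?_⟩
    rw [div_le_div_iff₀ (hv n) (abs_pos.2 hs), mul_comm (v (n + 1))]
    exact abs_mul_succ_le_of_Bop_bounded (zero_lt_one.trans hp) hv0 hC n
  · rintro ⟨M, hM⟩
    have hM0 : 0 < M := (div_pos (hv 1) (hv 0)).trans_le (hM 0)
    have hM' : ∀ n, v (n + 1) ≤ M * v n := fun n => (div_le_iff₀ (hv n)).1 (hM n)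
    exact ⟨|s| * M + |r|, add_pos_of_pos_of_nonneg (mul_pos (abs_pos.2 hs) hM0) (abs_nonneg r),
      summable_and_tsum_Bop_le hp.le hv0 hM0.le hM' r s⟩
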